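/- Let M be a real symmetric positive-definite m×m matrix (m ≥ 1). Then log det M = −∫₀^{e^{−γ}} Tr(e^{−tM} − I) dt/t − ∫_{e^{−γ}}^∞ Tr(e^{−tM}) dt/t, where γ is the Euler–Mascheroni constant, I is the m×m identity matrix, and both integrals converge absolutely. -/

import Mathlib

open MeasureTheory Filter Set
open scoped ENNReal Classical Topology RealInnerProductSpace

noncomputable section

/-- The Euclidean plane `ℝ²`. -/
abbrev Plane : Type := EuclideanSpace ℝ (Fin 2)

/-- The point of the plane corresponding to a lattice point of `ℤ²`. -/
def latticePt (p : ℤ × ℤ) : Plane :=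
  (WithLp.equiv 2 (Fin 2 → ℝ)).symm ![(p.1 : ℝ), (p.2 : ℝ)]

/-- Nearest-neighbour relation on `ℤ²` (`ℓ¹`-distance one). -/
def adjacent (p q : ℤ × ℤ) : Prop := |p.1 - q.1| + |p.2 - q.2| = 1

/-- The transition density of planar Brownian motion:
`p_s(z, w) = (4πs)⁻¹ exp(-|z-w|²/(4s))`, expressed as a function of `z - w`. -/
def gaussD (s : ℝ) (z : Plane) : ℝ := (4 * Real.pi * s)⁻¹ * Real.exp (-‖z‖ ^ 2 / (4 * s))

/-- The number of nearest-neighbour lattice paths of length `n` from `0` to `z` in `ℤ²`. -/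
def pathCount : ℕ → ℤ × ℤ → ℕ
  | 0, z => if z = 0 then 1 else 0
  | n + 1, z => pathCount n (z + (1, 0)) + pathCount n (z - (1, 0)) +
      pathCount n (z + (0, 1)) + pathCount n (z - (0, 1))

/-- Transition probability of the continuous-time simple random walk on `ℤ²` which jumps
to each of its four nearest neighbours at rate 1: probability of displacement `z` in time `t`. -/
def dKernel (t : ℝ) (z : ℤ × ℤ) : ℝ :=
  Real.exp (-(4 * t)) * ∑' n : ℕ, t ^ n / (n.factorial : ℝ) * (pathCount n z : ℝ)

/-- `P̃₀(t) = P₀[W̃_t = 0]`. -/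
def dP0 (t : ℝ) : ℝ := dKernel t 0

/-- `(P, W)` is a family of planar Brownian motions: under `P x`, the process `W` is a.s.
continuous, starts at `x`, and has independent increments with the Gaussian transition
density `gaussD`. -/
structure IsBrownian {Ω' : Type} [MeasurableSpace Ω'] (P : Plane → Measure Ω')
    (W : ℝ → Ω' → Plane) : Prop where
  prob : ∀ x, IsProbabilityMeasure (P x)
  meas : ∀ t, Measurable (W t)
  start : ∀ x, P x {ω | W 0 ω = x} = 1
  cont : ∀ x, P x {ω | Continuous fun s => W s ω} = 1
  incr : ∀ x (s t : ℝ), 0 ≤ s → s < t →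
    Measure.map (fun ω => W t ω - W s ω) (P x)
      = volume.withDensity fun z => ENNReal.ofReal (gaussD (t - s) z)
  indep : ∀ x (n : ℕ) (τ : Fin (n + 1) → ℝ), Monotone τ → 0 ≤ τ 0 →
    ProbabilityTheory.iIndepFun
      (fun (i : Fin n) ω => W (τ i.succ) ω - W (τ i.castSucc) ω) (P x)

/-- Regularity of a lattice-walk trajectory: right-constancy, left-constancy on a small
interval before each time, and jumps only to nearest neighbours. -/
def WalkRegular {Ω' : Type} (W : ℝ → Ω' → ℤ × ℤ) (ω : Ω') : Prop :=
  ∀ s : ℝ,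
    (∃ ε > 0, ∀ u ∈ Set.Ico s (s + ε), W u ω = W s ω) ∧
    (∃ ε > 0, ∀ u ∈ Set.Ioo (s - ε) s, ∀ v ∈ Set.Ioo (s - ε) s, W u ω = W v ω) ∧
    (∀ p : ℤ × ℤ, (∃ ε > 0, ∀ u ∈ Set.Ioo (s - ε) s, W u ω = p) →
      p = W s ω ∨ adjacent p (W s ω))

/-- `(P, W)` is a family of continuous-time simple random walks on `ℤ²` jumping to each of
the four nearest neighbours at rate 1: under `P x` the process starts at `x`, is a.s. a
regular jump path, and has independent increments with transition probabilities `dKernel`. -/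
structure IsLatticeWalk {Ω' : Type} [MeasurableSpace Ω'] (P : ℤ × ℤ → Measure Ω')
    (W : ℝ → Ω' → ℤ × ℤ) : Prop where
  prob : ∀ x, IsProbabilityMeasure (P x)
  meas : ∀ t, Measurable (W t)
  start : ∀ x, P x {ω | W 0 ω = x} = 1
  regular : ∀ x, P x {ω | WalkRegular W ω} = 1
  incr : ∀ x (s t : ℝ), 0 ≤ s → s < t → ∀ z : ℤ × ℤ,
    P x {ω | W t ω - W s ω = z} = ENNReal.ofReal (dKernel (t - s) z)
  indep : ∀ x (n : ℕ) (τ : Fin (n + 1) → ℝ), Monotone τ → 0 ≤ τ 0 →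
    ProbabilityTheory.iIndepFun
      (fun (i : Fin n) ω => W (τ i.succ) ω - W (τ i.castSucc) ω) (P x)

/-- Exit time `T_X := inf {s ≥ 0 : W_s ∉ X}` (equal to `∞` when the path never leaves `X`). -/
def exitTime {Ω' : Type} (W : ℝ → Ω' → Plane) (X : Set Plane) (ω : Ω') : ℝ≥0∞ :=
  sInf (ENNReal.ofReal '' {s : ℝ | 0 ≤ s ∧ W s ω ∉ X})

/-- The event `T_X > t`. -/
def survives {Ω' : Type} (W : ℝ → Ω' → Plane) (X : Set Plane) (t : ℝ) (ω : Ω') : Prop :=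
  ENNReal.ofReal t < exitTime W X ω

/-- The diagonal Dirichlet heat kernel
`P^D_X(x,x;t) := lim_{r→0⁺} (πr²)⁻¹ P_x[|W_t - x| ≤ r, T_X > t]`. -/
def PD {Ω' : Type} [MeasurableSpace Ω'] (P : Plane → Measure Ω') (W : ℝ → Ω' → Plane)
    (X : Set Plane) (x : Plane) (t : ℝ) : ℝ :=
  limUnder (𝓝[>] (0 : ℝ)) fun r : ℝ =>
    (Real.pi * r ^ 2)⁻¹ * (P x {ω | dist (W t ω) x ≤ r ∧ survives W X t ω}).toReal

/-- The event `T̃_X > t` for the lattice walk: up to time `t`, every jump of the walk is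
along an edge whose closed unit segment is contained in `X` (positions occupied during
`(0,t]` giving degenerate segments). `p` ranges over the left-limit positions. -/
def edgeSafe {Ω' : Type} (W : ℝ → Ω' → ℤ × ℤ) (X : Set Plane) (t : ℝ) (ω : Ω') : Prop :=
  ∀ s ∈ Set.Ioc (0 : ℝ) t, ∀ p : ℤ × ℤ,
    (∃ ε > 0, ∀ u ∈ Set.Ioo (s - ε) s, W u ω = p) →
    segment ℝ (latticePt p) (latticePt (W s ω)) ⊆ X

/-- The discrete Dirichlet heat kernel `P̃^D_X(x,y;t) := P_x[W̃_t = y, T̃_X > t]`. -/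
def dPDxy {Ω' : Type} [MeasurableSpace Ω'] (P : ℤ × ℤ → Measure Ω') (W : ℝ → Ω' → ℤ × ℤ)
    (X : Set Plane) (x y : ℤ × ℤ) (t : ℝ) : ℝ :=
  (P x {ω | W t ω = y ∧ edgeSafe W X t ω}).toReal

/-- The diagonal discrete Dirichlet heat kernel `P̃^D_X(x,x;t)`. -/
def dPD {Ω' : Type} [MeasurableSpace Ω'] (P : ℤ × ℤ → Measure Ω') (W : ℝ → Ω' → ℤ × ℤ)
    (X : Set Plane) (x : ℤ × ℤ) (t : ℝ) : ℝ :=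
  dPDxy P W X x x t

/-- The discrete Dirichlet Laplacian of the region `X`, as a matrix indexed by a finset `F`
(to be taken equal to the set of lattice points in `X`):
`(Δ̃_X f)(x) = 4 f(x) - Σ_y f(y)`, the sum over nearest neighbours `y` of `x` such that the
closed segment from `x` to `y` is contained in `X`. -/
def dLap (X : Set Plane) (F : Finset (ℤ × ℤ)) : Matrix F F ℝ := fun x y =>
  if x = y then 4
  else if adjacent x.1 y.1 ∧ segment ℝ (latticePt x.1) (latticePt y.1) ⊆ X then -1 else 0

/-- Entry `(x,y)` of the matrix exponential `e^M = Σ_n Mⁿ/n!`. -/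
def matExpEntry {ι : Type} [Fintype ι] [DecidableEq ι] (M : Matrix ι ι ℝ) (x y : ι) : ℝ :=
  ∑' n : ℕ, ((n.factorial : ℝ))⁻¹ * (M ^ n) x y

/-- The trace of the matrix exponential `e^M`. -/
def trExp {ι : Type} [Fintype ι] [DecidableEq ι] (M : Matrix ι ι ℝ) : ℝ :=
  ∑ x, matExpEntry M x x
/-- A polygonal domain: a bounded, connected, open subset of the plane whose boundary is a
finite disjoint union of (simple closed) polygons all of whose vertices lie in `ℤ²`.
The `k`-th boundary polygon has `len k ≥ 3` vertices `vtx k i`, indexed cyclically. -/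
structure PolygonalDomain where
  carrier : Set Plane
  isOpen : IsOpen carrier
  bounded : Bornology.IsBounded carrier
  connected : IsConnected carrier
  N : ℕ
  len : Fin N → ℕ
  three_le : ∀ k, 3 ≤ len k
  vtx : (k : Fin N) → ZMod (len k) → ℤ × ℤ
  boundary_eq : frontier carrier =
    ⋃ k, ⋃ i, segment ℝ (latticePt (vtx k i)) (latticePt (vtx k (i + 1)))
  nondegenerate : ∀ k i, vtx k i ≠ vtx k (i + 1)
  simple_adj : ∀ k i,
    segment ℝ (latticePt (vtx k i)) (latticePt (vtx k (i + 1))) ∩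
      segment ℝ (latticePt (vtx k (i + 1))) (latticePt (vtx k (i + 2)))
    = {latticePt (vtx k (i + 1))}
  simple_nonadj : ∀ k (i j : ZMod (len k)), j ≠ i → j ≠ i + 1 → j + 1 ≠ i →
    Disjoint (segment ℝ (latticePt (vtx k i)) (latticePt (vtx k (i + 1))))
      (segment ℝ (latticePt (vtx k j)) (latticePt (vtx k (j + 1))))
  comp_disjoint : ∀ k l, k ≠ l →
    Disjoint (⋃ i, segment ℝ (latticePt (vtx k i)) (latticePt (vtx k (i + 1))))
      (⋃ i, segment ℝ (latticePt (vtx l i)) (latticePt (vtx l (i + 1))))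

/-- The `i`-th closed edge of the `k`-th boundary polygon. -/
def PolygonalDomain.edge (D : PolygonalDomain) (k : Fin D.N) (i : ZMod (D.len k)) :
    Set Plane :=
  segment ℝ (latticePt (D.vtx k i)) (latticePt (D.vtx k (i + 1)))

/-- `κ(Π)`: the largest `κ > 0` such that, for every `x ∈ Π`, `B_κ(x) ∩ ∂Π` is contained in
the union of two adjacent boundary segments. -/
def PolygonalDomain.kappa (D : PolygonalDomain) : ℝ :=
  sSup {κ : ℝ | 0 < κ ∧ ∀ x ∈ D.carrier, ∃ k i,
    Metric.closedBall x κ ∩ frontier D.carrier ⊆ D.edge k i ∪ D.edge k (i + 1)}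

/-- The total perimeter of a polygonal domain. -/
def PolygonalDomain.perimeter (D : PolygonalDomain) : ℝ :=
  ∑ k : Fin D.N,
    haveI : NeZero (D.len k) := ⟨by have := D.three_le k; omega⟩
    ∑ i : ZMod (D.len k), dist (latticePt (D.vtx k i)) (latticePt (D.vtx k (i + 1)))

/-- `θ` is the interior angle of `S` at `v`: for all small `ε`, the area of `B_ε(v) ∩ S`
is `θ ε² / 2`. -/
def InteriorAngleAt (S : Set Plane) (v : Plane) (θ : ℝ) : Prop :=
  θ ∈ Set.Ioo 0 (2 * Real.pi) ∧
    ∃ ε₀ > 0, ∀ ε ∈ Set.Ioo 0 ε₀, (volume (Metric.ball v ε ∩ S)).toReal = θ * ε ^ 2 / 2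

/-- The interior angle of `S` at `v` (junk value if there is none). -/
def interiorAngle (S : Set Plane) (v : Plane) : ℝ := sSup {θ | InteriorAngleAt S v θ}

/-- The corners of `S`: boundary points at which the interior angle exists and is `≠ π`. -/
def cornersOf (S : Set Plane) : Set Plane :=
  {v | v ∈ frontier S ∧ ∃ θ, InteriorAngleAt S v θ ∧ θ ≠ Real.pi}

/-- `a₂(Π) = Σ_corners (π² - θ²) / (24 π θ)`. -/
def a2val (S : Set Plane) : ℝ :=
  ∑ᶠ v ∈ cornersOf S, (Real.pi ^ 2 - interiorAngle S v ^ 2) / (24 * Real.pi * interiorAngle S v)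

/-- `α₂(Π) = Σ_corners (π² - θ²) / (12 π θ)`. -/
def alpha2val (S : Set Plane) : ℝ :=
  ∑ᶠ v ∈ cornersOf S, (Real.pi ^ 2 - interiorAngle S v ^ 2) / (12 * Real.pi * interiorAngle S v)

/-- `a₀(Π) = |Π| / (4π)`. -/
def PolygonalDomain.a0 (D : PolygonalDomain) : ℝ := (volume D.carrier).toReal / (4 * Real.pi)

/-- `a₁(Π) = -|∂Π| / (8√π)`. -/
def PolygonalDomain.a1 (D : PolygonalDomain) : ℝ := -D.perimeter / (8 * Real.sqrt Real.pi)

/-- The scaled region `LΠ`. -/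
def scaleSet (L : ℕ) (S : Set Plane) : Set Plane := (fun z => (L : ℝ) • z) '' S

/-- `Ω⁻(δ) := {x ∈ Ω : dist(x, Ωᶜ) > δ}`. -/
def innerSet (S : Set Plane) (δ : ℝ) : Set Plane := {x ∈ S | δ < Metric.infDist x Sᶜ}

/-- `Ω⁺(δ) := {x ∈ ℝ² : dist(x, Ω) < δ}`. -/
def outerSet (S : Set Plane) (δ : ℝ) : Set Plane := {x | Metric.infDist x S < δ}

/-- The lattice points lying in `S`. -/
def latticeIn (S : Set Plane) : Set (ℤ × ℤ) := {p | latticePt p ∈ S}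

/-- The exterior boundary `∂_ext(S ∩ ℤ²)`: lattice points outside `S` with a nearest
neighbour inside `S`. -/
def extBoundary (S : Set Plane) : Set (ℤ × ℤ) :=
  {p | latticePt p ∉ S ∧ ∃ q, adjacent p q ∧ latticePt q ∈ S}

/-- The translated local neighbourhood `(B₂(x) ∩ S) - x`. -/
def shiftedNbhd (S : Set Plane) (x : Plane) : Set Plane :=
  (fun z => z - x) '' (Metric.closedBall x 2 ∩ S)

/-- The trace of the Dirichlet heat kernel, `∫_S P^D_S(x,x;t) dx`. -/
def heatTrace {Ω' : Type} [MeasurableSpace Ω'] (P : Plane → Measure Ω')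
    (W : ℝ → Ω' → Plane) (S : Set Plane) (t : ℝ) : ℝ :=
  ∫ x in S, PD P W S x t

/-- `F_S(t) := Tr e^{-tΔ_S} - c₀ t⁻¹ - c₁ t^{-1/2} - c₂ 𝟙_{[0, e^{-γ}]}(t)`. -/
def Ffun {Ω' : Type} [MeasurableSpace Ω'] (P : Plane → Measure Ω') (W : ℝ → Ω' → Plane)
    (S : Set Plane) (c0 c1 c2 t : ℝ) : ℝ :=
  heatTrace P W S t - c0 / t - c1 / Real.sqrt t
    - c2 * Set.indicator (Set.Icc 0 (Real.exp (-Real.eulerMascheroniConstant))) 1 t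

/-- `F_Π` for a polygonal domain `Π`. -/
def FPoly {Ω' : Type} [MeasurableSpace Ω'] (P : Plane → Measure Ω') (W : ℝ → Ω' → Plane)
    (D : PolygonalDomain) (t : ℝ) : ℝ :=
  Ffun P W D.carrier D.a0 D.a1 (a2val D.carrier) t

/-- `α₃(Π) := -∫₀^∞ F_Π(t) dt/t`, the logarithm of the ζ-regularized determinant. -/
def alpha3 {Ω' : Type} [MeasurableSpace Ω'] (P : Plane → Measure Ω') (W : ℝ → Ω' → Plane)
    (D : PolygonalDomain) : ℝ :=
  -∫ t in Set.Ioi (0 : ℝ), FPoly P W D t / t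

/-- `α₀ := ∫₀^∞ (𝟙_{[0,e^{-γ})}(t) - P̃₀(t)) dt/t`. -/
def alpha0 : ℝ :=
  ∫ t in Set.Ioi (0 : ℝ),
    (Set.indicator (Set.Ico 0 (Real.exp (-Real.eulerMascheroniConstant))) 1 t - dP0 t) / t

/-!
Diagonalising `M = U diag(λ) Uᴴ` turns `Tr e^{-tM}` into `∑ᵢ e^{-λᵢ t}` and `log det M` into
`∑ᵢ log λᵢ`, so it suffices to treat a single `λ > 0`. Integrating by parts against
`log t - log a` turns the two integrals, split at `a`, into `λ ∫₀^∞ e^{-λt} (log t - log a) dt`,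
and the substitution `u = λt` reduces this to `Γ'(1) = ∫₀^∞ e^{-u} log u du = -γ`; the choice
`a = e^{-γ}` cancels the constant.
-/

open Real

local notation "γ" => Real.eulerMascheroniConstant

theorem integral_exp_neg_mul_log : ∫ t in Ioi (0 : ℝ), exp (-t) * log t = -γ := by
  have hC := Complex.hasDerivAt_GammaIntegral (s := 1) (by norm_num)
  have hval : (∫ t : ℝ in Ioi 0, (t : ℂ) ^ ((1 : ℂ) - 1) * (log t * exp (-t)))
      = ((∫ t in Ioi (0 : ℝ), exp (-t) * log t : ℝ) : ℂ) := by
    rw [← integral_complex_ofReal]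
    refine setIntegral_congr_fun measurableSet_Ioi fun t _ => ?_
    push_cast
    rw [sub_self, Complex.cpow_zero, one_mul, mul_comm]
  have hR := (hval ▸ hC).real_of_complex
  have hEq : (fun x : ℝ => (Complex.GammaIntegral x).re) =ᶠ[𝓝 1] Gamma := by
    filter_upwards [eventually_gt_nhds one_pos] with x hx
    rw [Complex.GammaIntegral_ofReal, Complex.ofReal_re, ← Gamma_eq_integral hx]
  exact (hR.congr_of_eventuallyEq hEq.symm).unique (by simpa using hasDerivAt_Gamma_one)

theorem abs_log_le_two_mul_rpow_neg_half_add_self {t : ℝ} (ht : 0 < t) :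
    |log t| ≤ 2 * t ^ (-(1 / 2) : ℝ) + t := by
  have hpos : log t ≤ t := (log_le_sub_one_of_pos ht).trans (by linarith)
  have hneg : -log t ≤ 2 * t ^ (-(1 / 2) : ℝ) := by
    have h := log_le_sub_one_of_pos (rpow_pos_of_pos ht (-(1 / 2)))
    rw [log_rpow ht] at h
    linarith
  have : 0 < t ^ (-(1 / 2) : ℝ) := rpow_pos_of_pos ht _
  exact abs_le.2 ⟨by linarith, by linarith⟩

section ExpNegMul

variable {a b : ℝ}

theorem abs_one_sub_exp_neg_mul_le (hb : 0 ≤ b) {t : ℝ} (ht : 0 ≤ t) :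
    |1 - exp (-(b * t))| ≤ b * t := by
  have hle : exp (-(b * t)) ≤ 1 := exp_le_one_iff.2 (by nlinarith)
  rw [abs_of_nonneg (by linarith)]
  linarith [one_sub_le_exp_neg (b * t)]

theorem integrableOn_exp_neg_mul_sub_one_div_Ioc (hb : 0 ≤ b) (a : ℝ) :
    IntegrableOn (fun t => (exp (-(b * t)) - 1) / t) (Ioc 0 a) := by
  refine Measure.integrableOn_of_bounded (M := b) measure_Ioc_lt_top.ne
    (by fun_prop : Measurable fun t => (exp (-(b * t)) - 1) / t).aestronglyMeasurable ?_
  filter_upwards [ae_restrict_mem measurableSet_Ioc] with t ht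
  rw [norm_div, Real.norm_eq_abs, abs_sub_comm, norm_of_nonneg ht.1.le, div_le_iff₀ ht.1]
  exact abs_one_sub_exp_neg_mul_le hb ht.1.le

theorem integrableOn_exp_neg_mul_div_Ioi (hb : 0 < b) (ha : 0 < a) :
    IntegrableOn (fun t => exp (-(b * t)) / t) (Ioi a) := by
  refine ((exp_neg_integrableOn_Ioi a hb).const_mul a⁻¹).mono'
    (by fun_prop : Measurable fun t => exp (-(b * t)) / t).aestronglyMeasurable ?_
  filter_upwards [ae_restrict_mem measurableSet_Ioi] with t (ht : a < t)
  rw [norm_of_nonneg (div_nonneg (exp_pos _).le (ha.trans ht).le), div_eq_inv_mul, ← neg_mul]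
  gcongr

theorem integrableOn_exp_neg_mul_mul_log (hb : 0 < b) :
    IntegrableOn (fun t => exp (-(b * t)) * log t) (Ioi 0) := by
  have hmaj : IntegrableOn
      (fun t : ℝ => 2 * (t ^ (-(1 / 2) : ℝ) * exp (-b * t ^ (1 : ℝ)))
        + t ^ (1 : ℝ) * exp (-b * t ^ (1 : ℝ))) (Ioi 0) :=
    ((integrableOn_rpow_mul_exp_neg_mul_rpow (by norm_num) one_pos hb).const_mul 2).add
      (integrableOn_rpow_mul_exp_neg_mul_rpow (by norm_num) one_pos hb)
  refine hmaj.mono' (by fun_prop) ?_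
  filter_upwards [ae_restrict_mem measurableSet_Ioi] with t (ht : 0 < t)
  simp only [rpow_one, neg_mul, norm_mul, norm_of_nonneg (exp_pos _).le, Real.norm_eq_abs]
  nlinarith [abs_log_le_two_mul_rpow_neg_half_add_self ht, exp_pos (-(b * t))]

theorem integrableOn_exp_neg_mul_mul_log_sub (hb : 0 < b) (a : ℝ) :
    IntegrableOn (fun t => exp (-(b * t)) * (log t - log a)) (Ioi 0) := by
  have hexp : IntegrableOn (fun t => exp (-(b * t))) (Ioi 0) := by
    simpa using exp_neg_integrableOn_Ioi 0 hb
  refine ((integrableOn_exp_neg_mul_mul_log hb).sub (hexp.mul_const (log a))).congr_fun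
    (fun t _ => ?_) measurableSet_Ioi
  simp only [Pi.sub_apply, mul_sub]

theorem integral_exp_neg_mul_Ioi_zero (hb : 0 < b) :
    ∫ t in Ioi 0, exp (-(b * t)) = b⁻¹ := by
  rw [integral_comp_mul_left_Ioi (fun u => exp (-u)) 0 hb, mul_zero, integral_exp_neg_Ioi_zero,
    smul_eq_mul, mul_one]

theorem integral_exp_neg_mul_mul_log (hb : 0 < b) :
    ∫ t in Ioi 0, exp (-(b * t)) * log t = -(γ + log b) / b := by
  have hsub : ∀ t ∈ Ioi (0 : ℝ),
      exp (-(b * t)) * log t = (fun u => exp (-u) * (log u - log b)) (b * t) := fun t ht => by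
    simp only [log_mul hb.ne' (ne_of_gt ht), add_sub_cancel_left]
  have hlog : IntegrableOn (fun u => exp (-u) * log u) (Ioi 0) := by
    simpa using integrableOn_exp_neg_mul_mul_log one_pos
  have hint : ∫ u in Ioi (0 : ℝ), exp (-u) * (log u - log b) = -γ - log b := by
    simp only [mul_sub]
    rw [integral_sub hlog ((integrableOn_exp_neg_Ioi 0).mul_const _), integral_exp_neg_mul_log,
      integral_mul_const, integral_exp_neg_Ioi_zero, one_mul]
  have hscale := integral_comp_mul_left_Ioi (fun u => exp (-u) * (log u - log b)) 0 hb
  rw [setIntegral_congr_fun measurableSet_Ioi hsub, hscale, mul_zero, hint, smul_eq_mul]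
  field_simp
  ring

theorem tendsto_one_sub_exp_neg_mul_mul_log_sub (hb : 0 ≤ b) (a : ℝ) :
    Tendsto (fun t => (1 - exp (-(b * t))) * (log t - log a)) (𝓝[≥] 0) (𝓝 0) := by
  have hmaj : Tendsto (fun t => b * |t * log t| + b * t * |log a|) (𝓝[≥] 0) (𝓝 0) := by
    have h : Continuous fun t => b * |t * log t| + b * t * |log a| := by
      have := continuous_mul_log
      fun_prop
    simpa using h.continuousWithinAt.tendsto (x := 0) (s := Ici 0)
  refine squeeze_zero_norm' ?_ hmaj
  filter_upwards [self_mem_nhdsWithin] with t (ht : 0 ≤ t)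
  rw [norm_mul, Real.norm_eq_abs, Real.norm_eq_abs, abs_mul, abs_of_nonneg ht]
  calc |1 - exp (-(b * t))| * |log t - log a| ≤ (b * t) * (|log t| + |log a|) :=
        mul_le_mul (abs_one_sub_exp_neg_mul_le hb ht) (abs_sub _ _) (abs_nonneg _) (by positivity)
    _ = b * (t * |log t|) + b * t * |log a| := by ring

theorem integral_exp_neg_mul_sub_one_div_Ioc (hb : 0 < b) (ha : 0 < a) :
    ∫ t in Ioc 0 a, (exp (-(b * t)) - 1) / t
      = b * ∫ t in Ioc 0 a, exp (-(b * t)) * (log t - log a) := by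
  set F := fun t => (1 - exp (-(b * t))) * (log t - log a)
  have hcont : ContinuousOn F (Icc 0 a) := by
    intro t ht
    rcases ht.1.eq_or_lt with rfl | ht0
    · have hF0 : F 0 = 0 := by simp [F]
      rw [ContinuousWithinAt, hF0]
      exact (tendsto_one_sub_exp_neg_mul_mul_log_sub hb.le a).mono_left
        (nhdsWithin_mono _ Icc_subset_Ici_self)
    · exact (ContinuousAt.mul (by fun_prop)
        ((continuousAt_log ht0.ne').sub continuousAt_const)).continuousWithinAt
  have hderiv : ∀ t ∈ Ioo 0 a, HasDerivAt F
      (b * (exp (-(b * t)) * (log t - log a)) - (exp (-(b * t)) - 1) / t) t := by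
    intro t ht
    have h1 : HasDerivAt (fun t => 1 - exp (-(b * t))) (b * exp (-(b * t))) t := by
      simpa [mul_comm] using ((hasDerivAt_id t).const_mul (-b)).exp.const_sub 1
    refine (h1.mul ((hasDerivAt_log ht.1.ne').sub_const (log a))).congr_deriv ?_
    field_simp
    ring
  have hlog : IntegrableOn (fun t => exp (-(b * t)) * (log t - log a)) (Ioc 0 a) :=
    (integrableOn_exp_neg_mul_mul_log_sub hb a).mono_set Ioc_subset_Ioi_self
  have hdiv := integrableOn_exp_neg_mul_sub_one_div_Ioc hb.le a
  have hFTC := intervalIntegral.integral_eq_sub_of_hasDerivAt_of_le ha.le hcont hderiv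
    ((intervalIntegrable_iff_integrableOn_Ioc_of_le ha.le).2 ((hlog.const_mul b).sub hdiv))
  rw [intervalIntegral.integral_of_le ha.le, integral_sub (hlog.const_mul b) hdiv,
    integral_const_mul] at hFTC
  simp [F] at hFTC
  linarith

theorem integral_exp_neg_mul_div_Ioi (hb : 0 < b) (ha : 0 < a) :
    ∫ t in Ioi a, exp (-(b * t)) / t = b * ∫ t in Ioi a, exp (-(b * t)) * (log t - log a) := by
  set G := fun t => -(exp (-(b * t)) * (log t - log a))
  have hderiv : ∀ t ∈ Ici a, HasDerivAt G
      (b * (exp (-(b * t)) * (log t - log a)) - exp (-(b * t)) / t) t := by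
    intro t ht
    have h1 : HasDerivAt (fun t => exp (-(b * t))) (-b * exp (-(b * t))) t := by
      simpa [mul_comm] using ((hasDerivAt_id t).const_mul (-b)).exp
    refine (h1.mul ((hasDerivAt_log (ha.trans_le ht).ne').sub_const (log a))).neg.congr_deriv ?_
    field_simp
    ring
  have hlim : Tendsto G atTop (𝓝 0) := by
    have hdecay (s : ℝ) : Tendsto (fun t => t ^ s * exp (-(b * t))) atTop (𝓝 0) := by
      simpa using tendsto_rpow_mul_exp_neg_mul_atTop_nhds_zero s b hb
    have hmaj := (hdecay 1).add ((hdecay 0).const_mul |log a|)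
    simp only [rpow_one, rpow_zero, one_mul, mul_zero, add_zero] at hmaj
    refine squeeze_zero_norm' ?_ hmaj
    filter_upwards [eventually_ge_atTop 1] with t ht
    have hlog : |log t| ≤ t := by
      rw [abs_of_nonneg (log_nonneg ht)]
      linarith [log_le_sub_one_of_pos (zero_lt_one.trans_le ht)]
    rw [norm_neg, norm_mul, norm_of_nonneg (exp_pos _).le, Real.norm_eq_abs]
    nlinarith [abs_sub (log t) (log a), exp_pos (-(b * t))]
  have hlog : IntegrableOn (fun t => exp (-(b * t)) * (log t - log a)) (Ioi a) :=
    (integrableOn_exp_neg_mul_mul_log_sub hb a).mono_set (Ioi_subset_Ioi ha.le)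
  have hdiv := integrableOn_exp_neg_mul_div_Ioi hb ha
  have hFTC := integral_Ioi_of_hasDerivAt_of_tendsto' hderiv ((hlog.const_mul b).sub hdiv) hlim
  rw [integral_sub (hlog.const_mul b) hdiv, integral_const_mul] at hFTC
  simp [G] at hFTC
  linarith

theorem integral_Ioc_add_integral_Ioi_exp_neg_mul (hb : 0 < b) (ha : 0 < a) :
    (∫ t in Ioc 0 a, (exp (-(b * t)) - 1) / t) + ∫ t in Ioi a, exp (-(b * t)) / t
      = -(γ + log b + log a) := by
  have hlog := integrableOn_exp_neg_mul_mul_log_sub hb a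
  have hexp : IntegrableOn (fun t => exp (-(b * t))) (Ioi 0) := by
    simpa using exp_neg_integrableOn_Ioi 0 hb
  rw [integral_exp_neg_mul_sub_one_div_Ioc hb ha, integral_exp_neg_mul_div_Ioi hb ha, ← mul_add,
    ← intervalIntegral.integral_of_le ha.le,
    intervalIntegral.integral_interval_add_Ioi hlog (hlog.mono_set (Ioi_subset_Ioi ha.le))]
  simp only [mul_sub]
  rw [integral_sub (integrableOn_exp_neg_mul_mul_log hb) (hexp.mul_const _), integral_mul_const,
    integral_exp_neg_mul_mul_log hb, integral_exp_neg_mul_Ioi_zero hb]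
  field_simp
  ring

theorem log_eq_neg_integral_Ioc_sub_integral_Ioi (hb : 0 < b) :
    log b = -(∫ t in Ioc 0 (exp (-γ)), (exp (-(b * t)) - 1) / t)
      - ∫ t in Ioi (exp (-γ)), exp (-(b * t)) / t := by
  have h := integral_Ioc_add_integral_Ioi_exp_neg_mul hb (exp_pos (-γ))
  rw [log_exp] at h
  linarith

end ExpNegMul

section TraceExp

variable {ι : Type} [Fintype ι] [DecidableEq ι]

theorem matExpEntry_eq_exp_apply (A : Matrix ι ι ℝ) (x y : ι) :
    matExpEntry A x y = NormedSpace.exp A x y := by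
  open scoped Matrix.Norms.Operator in
  exact (Pi.hasSum.mp (Pi.hasSum.mp (NormedSpace.exp_series_hasSum_exp' (𝕂 := ℝ) A) x) y).tsum_eq

theorem trExp_eq_trace_exp (A : Matrix ι ι ℝ) : trExp A = (NormedSpace.exp A).trace := by
  simp only [trExp, matExpEntry_eq_exp_apply, Matrix.trace, Matrix.diag]

theorem trExp_conjStarAlgAut_diagonal (U : unitary (Matrix ι ι ℝ)) (v : ι → ℝ) :
    trExp (Unitary.conjStarAlgAut ℝ _ U (Matrix.diagonal v)) = ∑ i, exp (v i) := by
  have hconj := Matrix.exp_units_conj (Unitary.toUnits U) (Matrix.diagonal v)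
  have htr := Matrix.trace_units_conj (Unitary.toUnits U) (NormedSpace.exp (Matrix.diagonal v))
  simp only [Unitary.val_toUnits_apply, Unitary.val_inv_toUnits_apply, ← Unitary.star_eq_inv,
    Unitary.coe_star] at hconj htr
  rw [trExp_eq_trace_exp, Unitary.conjStarAlgAut_apply, hconj, htr, Matrix.exp_diagonal,
    Matrix.trace_diagonal, Real.exp_eq_exp_ℝ]
  simp

theorem Matrix.IsHermitian.trExp_neg_smul {A : Matrix ι ι ℝ} (hA : A.IsHermitian) (t : ℝ) :
    trExp (-(t • A)) = ∑ i, Real.exp (-(hA.eigenvalues i * t)) := by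
  conv_lhs => rw [hA.spectral_theorem]
  rw [← map_smul, ← map_neg, ← Matrix.diagonal_smul, Matrix.diagonal_neg,
    trExp_conjStarAlgAut_diagonal]
  simp [mul_comm]

end TraceExp

theorem log_det_eq_heat_trace_integrals_general (m : ℕ)
    (M : Matrix (Fin m) (Fin m) ℝ) (hpd : M.PosDef) :
    IntegrableOn (fun t : ℝ => (trExp (-(t • M)) - (m : ℝ)) / t)
      (Set.Ioc 0 (Real.exp (-Real.eulerMascheroniConstant))) volume ∧
    IntegrableOn (fun t : ℝ => trExp (-(t • M)) / t)
      (Set.Ioi (Real.exp (-Real.eulerMascheroniConstant))) volume ∧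
    Real.log M.det =
      -(∫ t in Set.Ioc (0 : ℝ) (Real.exp (-Real.eulerMascheroniConstant)),
          (trExp (-(t • M)) - (m : ℝ)) / t)
        - ∫ t in Set.Ioi (Real.exp (-Real.eulerMascheroniConstant)),
            trExp (-(t • M)) / t := by
  have hH := hpd.isHermitian
  have hpos := hpd.eigenvalues_pos
  have hJ : (fun t : ℝ => (trExp (-(t • M)) - (m : ℝ)) / t)
      = fun t => ∑ i, (exp (-(hH.eigenvalues i * t)) - 1) / t := by
    funext t
    simp [hH.trExp_neg_smul, ← Finset.sum_div]
  have hK : (fun t : ℝ => trExp (-(t • M)) / t)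
      = fun t => ∑ i, exp (-(hH.eigenvalues i * t)) / t := by
    funext t
    rw [hH.trExp_neg_smul, Finset.sum_div]
  have hdet : log M.det = ∑ i, log (hH.eigenvalues i) := by
    rw [hH.det_eq_prod_eigenvalues, ← log_prod fun i _ => (hpos i).ne']
    rfl
  have hJint i := integrableOn_exp_neg_mul_sub_one_div_Ioc (hpos i).le (exp (-γ))
  have hKint i := integrableOn_exp_neg_mul_div_Ioi (hpos i) (exp_pos (-γ))
  rw [hJ, hK, hdet, integral_finsetSum _ fun i _ => hJint i,
    integral_finsetSum _ fun i _ => hKint i, ← Finset.sum_neg_distrib, ← Finset.sum_sub_distrib]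
  exact ⟨integrable_finsetSum _ fun i _ => hJint i, integrable_finsetSum _ fun i _ => hKint i,
    Finset.sum_congr rfl fun i _ => log_eq_neg_integral_Ioc_sub_integral_Ioi (hpos i)⟩

/-- For a real symmetric positive-definite `m × m` matrix `M` (`m ≥ 1`),
`log det M = -∫₀^{e^{-γ}} Tr(e^{-tM} - I) dt/t - ∫_{e^{-γ}}^∞ Tr(e^{-tM}) dt/t`,
both integrals being absolutely convergent. -/
theorem log_det_eq_heat_trace_integrals (m : ℕ) (hm : 1 ≤ m)
    (M : Matrix (Fin m) (Fin m) ℝ) (hsym : M.IsSymm) (hpd : M.PosDef) :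
    IntegrableOn (fun t : ℝ => (trExp (-(t • M)) - (m : ℝ)) / t)
      (Set.Ioc 0 (Real.exp (-Real.eulerMascheroniConstant))) volume ∧
    IntegrableOn (fun t : ℝ => trExp (-(t • M)) / t)
      (Set.Ioi (Real.exp (-Real.eulerMascheroniConstant))) volume ∧
    Real.log M.det =
      -(∫ t in Set.Ioc (0 : ℝ) (Real.exp (-Real.eulerMascheroniConstant)),
          (trExp (-(t • M)) - (m : ℝ)) / t)
        - ∫ t in Set.Ioi (Real.exp (-Real.eulerMascheroniConstant)),
            trExp (-(t • M)) / t :=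
  log_det_eq_heat_trace_integrals_general m M hpd
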